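/- For all integers d ≥ 2 and δ ≥ 2, with λ the minimizer of ψ(d,δ,·) among p₁ = δd−1+⌊δ√(d²−d)⌋ and p₂ = p₁+1, one has ψ(d,δ,λ) ≤ (4d² − 2d − 1/4)δ. -/

import Mathlib

open scoped Classical

/-- ψ(d,δ,x) = δd²(x−δ+1)/(x−δd+1) + d(x−δ+1) − 1 -/
noncomputable def psi (d δ : ℤ) (x : ℝ) : ℝ :=
  (δ : ℝ) * (d : ℝ) ^ 2 * (x - (δ : ℝ) + 1) / (x - (δ : ℝ) * (d : ℝ) + 1)
    + (d : ℝ) * (x - (δ : ℝ) + 1) - 1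

/-- p₁ = δd − 1 + ⌊δ√(d²−d)⌋ -/
noncomputable def p1 (d δ : ℤ) : ℤ :=
  δ * d - 1 + ⌊(δ : ℝ) * Real.sqrt ((d : ℝ) ^ 2 - (d : ℝ))⌋

/-- λ : the minimizer of ψ(d,δ,·) among p₁ and p₂ = p₁ + 1 -/
noncomputable def lam (d δ : ℤ) : ℤ :=
  if psi d δ (p1 d δ : ℝ) ≤ psi d δ ((p1 d δ : ℝ) + 1) then p1 d δ else p1 d δ + 1

/-!
Write x = δd − 1 + u. Then ψ(d,δ,x) = d·u + d·t²/u + 2δd² − δd − 1 with t = δ√(d²−d), and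
d·u + d·t²/u = 2dt + d(u − t)²/u. Either p₁ or p₂ is δd − 1 + round t, and for that choice
|u − t| ≤ 1/2 makes the error term d(u − t)²/u at most 1, while 2d√(d²−d) ≤ 2d² − d − 1/4
bounds the main term 2dt.
-/

open Real

lemma round_eq_floor_or_eq_floor_add_one (x : ℝ) : round x = ⌊x⌋ ∨ round x = ⌊x⌋ + 1 := by
  have hlo : ⌊x⌋ ≤ ⌊x + 1 / 2⌋ := Int.floor_mono (by linarith)
  have hhi : ⌊x + 1 / 2⌋ ≤ ⌊x⌋ + 1 := by
    rw [← Int.floor_add_one]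
    exact Int.floor_mono (by linarith)
  rw [round_eq]
  omega

lemma mul_add_mul_sq_div_eq {a t u : ℝ} (hu : u ≠ 0) :
    a * u + a * t ^ 2 / u = 2 * a * t + a * (u - t) ^ 2 / u := by
  field_simp
  ring

lemma two_mul_mul_sqrt_sq_sub_self_le {d : ℝ} (hd : 1 ≤ d) :
    2 * d * √(d ^ 2 - d) ≤ 2 * d ^ 2 - d - 1 / 4 := by
  have hs := sq_sqrt (show 0 ≤ d ^ 2 - d by nlinarith)
  have := sqrt_nonneg (d ^ 2 - d)
  nlinarith [sq_nonneg (2 * d * √(d ^ 2 - d) - (2 * d ^ 2 - d - 1 / 4))]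

lemma mul_sq_div_le_one_of_abs_sub_le_half {a t u : ℝ} (hu : 0 < u) (hau : a ≤ 4 * u)
    (hut : |u - t| ≤ 1 / 2) : a * (u - t) ^ 2 / u ≤ 1 := by
  have hsq : (u - t) ^ 2 ≤ 1 / 4 := by
    rw [← sq_abs]
    nlinarith [abs_nonneg (u - t)]
  rw [div_le_one hu]
  nlinarith [sq_nonneg (u - t)]

lemma psi_shift (d δ : ℤ) {u : ℝ} (hu : u ≠ 0) :
    psi d δ (δ * d - 1 + u)
      = d * u + d * (δ ^ 2 * (d ^ 2 - d)) / u + 2 * δ * d ^ 2 - δ * d - 1 := by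
  unfold psi
  rw [show (δ : ℝ) * d - 1 + u - δ * d + 1 = u by ring]
  field_simp
  ring

lemma psi_shift_le {d δ : ℤ} (hd : 2 ≤ d) (hδ : 2 ≤ δ) {u : ℝ}
    (hu : |u - δ * √((d : ℝ) ^ 2 - d)| ≤ 1 / 2) :
    psi d δ (δ * d - 1 + u) ≤ (4 * (d : ℝ) ^ 2 - 2 * d - 1 / 4) * δ := by
  have hd' : (2 : ℝ) ≤ d := by exact_mod_cast hd
  have hδ' : (2 : ℝ) ≤ δ := by exact_mod_cast hδ
  set s := √((d : ℝ) ^ 2 - d)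
  have hs : s ^ 2 = (d : ℝ) ^ 2 - d := sq_sqrt (by nlinarith)
  have hs_ge : (d : ℝ) - 1 ≤ s := (le_sqrt (by linarith) (by nlinarith)).2 (by nlinarith)
  have ht_ge : 2 * (d : ℝ) - 2 ≤ δ * s := by nlinarith
  have hu_ge : δ * s - 1 / 2 ≤ u := by linarith [(abs_le.1 hu).1]
  have hu_pos : 0 < u := by linarith
  have hmain : 2 * (d : ℝ) * (δ * s) ≤ (2 * d ^ 2 - d - 1 / 4) * δ := by
    nlinarith [two_mul_mul_sqrt_sq_sub_self_le (d := (d : ℝ)) (by linarith)]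
  have herr : (d : ℝ) * (u - δ * s) ^ 2 / u ≤ 1 :=
    mul_sq_div_le_one_of_abs_sub_le_half hu_pos (by linarith) hu
  rw [psi_shift d δ hu_pos.ne', ← hs, ← mul_pow, mul_add_mul_sq_div_eq hu_pos.ne']
  linarith

lemma psi_lam (d δ : ℤ) :
    psi d δ (lam d δ) = min (psi d δ (p1 d δ)) (psi d δ ((p1 d δ : ℝ) + 1)) := by
  unfold lam
  split_ifs with h
  · exact (min_eq_left h).symm
  · push_cast
    exact (min_eq_right (not_le.1 h).le).symm

theorem stmt_14 (d δ : ℤ) (hd : 2 ≤ d) (hδ : 2 ≤ δ) :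
    psi d δ (lam d δ : ℝ) ≤
      (4 * (d : ℝ) ^ 2 - 2 * (d : ℝ) - 1 / 4) * (δ : ℝ) := by
  set t := (δ : ℝ) * √((d : ℝ) ^ 2 - d)
  have hp1 : (p1 d δ : ℝ) = δ * d - 1 + ⌊t⌋ := by
    simp only [p1, t]
    push_cast
    ring
  have hround : psi d δ (δ * d - 1 + round t) ≤ (4 * (d : ℝ) ^ 2 - 2 * d - 1 / 4) * δ :=
    psi_shift_le hd hδ (by rw [abs_sub_comm]; exact abs_sub_round t)
  rw [psi_lam]
  rcases round_eq_floor_or_eq_floor_add_one t with h | h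
  · rw [h] at hround
    exact (min_le_left _ _).trans (by rwa [hp1])
  · rw [h] at hround
    push_cast at hround
    exact (min_le_right _ _).trans (by rwa [hp1, add_assoc])
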